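/- (Corollary 1, exact identity) Suppose e_{[k]1}=e_1 and f_{[k]}=f for all k=1,…,K (so π_{[k]}=Π_{[k]} and e_0=1−e_1). Then V_{ττ,C} − V_{ττ} = (N/(N−1))·Σ_{k=1}^K Π_{[k]} d_{[k]} − (1/(N−1))·Σ_{k=1}^K (1−Π_{[k]}) V_{[k]ττ}, where d_{[k]} = [ (e_0/e_1)^{1/2}(Ȳ_{[k]}(1)−Ȳ(1)) + (e_1/e_0)^{1/2}(Ȳ_{[k]}(0)−Ȳ(0)) ]² + (1−f)(τ_{[k]}−τ)² ≥ 0. -/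

import Mathlib

open MeasureTheory ProbabilityTheory Filter Matrix
open scoped ENNReal NNReal

noncomputable section

namespace SurveyExperiments

/-- The uniform probability measure on a finite set of outcomes. -/
def unif {α : Type*} [MeasurableSpace α] (s : Finset α) : Measure α :=
  (s.card : ℝ≥0∞)⁻¹ • ∑ a ∈ s, MeasureTheory.Measure.dirac a

/-- The covariance of two real-valued random variables. -/
def covRV {Ω : Type*} [MeasurableSpace Ω] (μ : Measure Ω) (f g : Ω → ℝ) : ℝ :=
  ∫ ω, (f ω - ∫ x, f x ∂μ) * (g ω - ∫ x, g x ∂μ) ∂μ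

/-- The total variation distance between two measures. -/
def dTV {α : Type*} [MeasurableSpace α] (P Q : Measure α) : ℝ :=
  ⨆ A : Set α, |(P A).toReal - (Q A).toReal|

/-- The standard Gaussian measure on `ℝ^J`. -/
def stdGaussianPi (J : ℕ) : Measure (Fin J → ℝ) := Measure.pi fun _ => gaussianReal 0 1

/-- The law `L_{J,a}` of the first coordinate of a standard Gaussian vector in `ℝ^J`
conditioned on the event that its squared norm is at most `a`. -/
def truncGaussian (J : ℕ) [NeZero J] (a : ℝ) : Measure ℝ :=
  Measure.map (fun x => x 0)
    (ProbabilityTheory.cond (stdGaussianPi J) {x | ∑ i, (x i) ^ 2 ≤ a})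

/-- `ν_{J,a}`, the variance of the truncated Gaussian `L_{J,a}`. -/
def nu (J : ℕ) [NeZero J] (a : ℝ) : ℝ := variance id (truncGaussian J a)

/-- The law of `√v (√(1-rW-rX) ε + √rW L_{J1,aS} + √rX L_{J2,aT})` with independent
`ε ~ N(0,1)`, `L_{J1,aS}`, `L_{J2,aT}`. -/
def rrLimitLaw (v rW rX : ℝ) (J1 J2 : ℕ) [NeZero J1] [NeZero J2] (aS aT : ℝ) : Measure ℝ :=
  Measure.map
    (fun p : ℝ × ℝ × ℝ =>
      Real.sqrt v * (Real.sqrt (1 - rW - rX) * p.1 + Real.sqrt rW * p.2.1 + Real.sqrt rX * p.2.2))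
    ((gaussianReal 0 1).prod ((truncGaussian J1 aS).prod (truncGaussian J2 aT)))

/-- The `p`-th quantile of a measure on `ℝ`. -/
def quantile (μ : Measure ℝ) (p : ℝ) : ℝ := sInf {x : ℝ | ENNReal.ofReal p ≤ μ (Set.Iic x)}

/-- The data of a stratified (randomized survey) experiment: a population of `N` units
partitioned into `K` strata by `st`, with `nk k` units sampled and `nk1 k` sampled units
treated in stratum `k`. -/
structure SRSE where
  K : ℕ
  N : ℕ
  st : Fin N → Fin K
  nk : Fin K → ℕ
  nk1 : Fin K → ℕ

namespace SRSE

variable (E : SRSE)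

def stratum (k : Fin E.K) : Finset (Fin E.N) := Finset.univ.filter fun i => E.st i = k
def Nk (k : Fin E.K) : ℕ := (E.stratum k).card
def nk0 (k : Fin E.K) : ℕ := E.nk k - E.nk1 k
def n : ℕ := ∑ k, E.nk k
def Pi (k : Fin E.K) : ℝ := (E.Nk k : ℝ) / (E.N : ℝ)
def pik (k : Fin E.K) : ℝ := (E.nk k : ℝ) / (E.n : ℝ)
def fk (k : Fin E.K) : ℝ := (E.nk k : ℝ) / (E.Nk k : ℝ)
def f : ℝ := (E.n : ℝ) / (E.N : ℝ)
def e1 (k : Fin E.K) : ℝ := (E.nk1 k : ℝ) / (E.nk k : ℝ)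
def e0 (k : Fin E.K) : ℝ := (E.nk0 k : ℝ) / (E.nk k : ℝ)

/-- Sample space: a pair of sampling indicators and treatment indicators. -/
abbrev Omega := (Fin E.N → Bool) × (Fin E.N → Bool)

/-- The attainable pairs of indicators: `nk k` sampled and `nk1 k` treated units in each
stratum `k`, with treated units sampled. -/
def valid : Finset E.Omega :=
  Finset.univ.filter fun ω =>
    (∀ k, ((E.stratum k).filter fun i => ω.1 i = true).card = E.nk k) ∧
    (∀ k, ((E.stratum k).filter fun i => ω.1 i = true ∧ ω.2 i = true).card = E.nk1 k) ∧
    (∀ i, ω.2 i = true → ω.1 i = true)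

/-- The stratified randomized survey experiment (SRSE) design: stratified random sampling
without replacement followed by stratified randomization, i.e. the uniform distribution over
all attainable pairs of indicator vectors. -/
def P : Measure E.Omega := unif E.valid

def Z (ω : E.Omega) (i : Fin E.N) : ℝ := if ω.1 i then 1 else 0
def T (ω : E.Omega) (i : Fin E.N) : ℝ := if ω.2 i then 1 else 0

def meanK (a : Fin E.N → ℝ) (k : Fin E.K) : ℝ := (∑ i ∈ E.stratum k, a i) / (E.Nk k : ℝ)
def covK (a b : Fin E.N → ℝ) (k : Fin E.K) : ℝ :=
  (∑ i ∈ E.stratum k, (a i - E.meanK a k) * (b i - E.meanK b k)) / ((E.Nk k : ℝ) - 1)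
def meanAll (a : Fin E.N → ℝ) : ℝ := (∑ i, a i) / (E.N : ℝ)
def varAll (a : Fin E.N → ℝ) : ℝ := (∑ i, (a i - E.meanAll a) ^ 2) / ((E.N : ℝ) - 1)

def mean1 (a : Fin E.N → ℝ) (k : Fin E.K) (ω : E.Omega) : ℝ :=
  (∑ i ∈ E.stratum k, E.Z ω i * E.T ω i * a i) / (E.nk1 k : ℝ)
def mean0 (a : Fin E.N → ℝ) (k : Fin E.K) (ω : E.Omega) : ℝ :=
  (∑ i ∈ E.stratum k, E.Z ω i * (1 - E.T ω i) * a i) / (E.nk0 k : ℝ)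
def meanS (a : Fin E.N → ℝ) (k : Fin E.K) (ω : E.Omega) : ℝ :=
  (∑ i ∈ E.stratum k, E.Z ω i * a i) / (E.nk k : ℝ)

/-- The stratified difference-in-means estimator. -/
def hatTau (Y1 Y0 : Fin E.N → ℝ) (ω : E.Omega) : ℝ :=
  ∑ k, E.Pi k * (E.mean1 Y1 k ω - E.mean0 Y0 k ω)
/-- The finite-population average treatment effect. -/
def tau (Y1 Y0 : Fin E.N → ℝ) : ℝ := ∑ k, E.Pi k * (E.meanK Y1 k - E.meanK Y0 k)
/-- The treated/control covariate-mean-difference `τ̂_X`. -/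
def hatTauX {J : ℕ} (X : Fin E.N → Fin J → ℝ) (ω : E.Omega) : Fin J → ℝ := fun j =>
  ∑ k, E.Pi k * (E.mean1 (fun i => X i j) k ω - E.mean0 (fun i => X i j) k ω)
/-- The sampled/population covariate-mean-difference `δ̂_W`. -/
def hatDeltaW {J : ℕ} (W : Fin E.N → Fin J → ℝ) (ω : E.Omega) : Fin J → ℝ := fun j =>
  ∑ k, E.Pi k * (E.meanS (fun i => W i j) k ω - E.meanK (fun i => W i j) k)

def sCov1 (a b : Fin E.N → ℝ) (k : Fin E.K) (ω : E.Omega) : ℝ :=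
  (∑ i ∈ E.stratum k, E.Z ω i * E.T ω i * (a i - E.mean1 a k ω) * (b i - E.mean1 b k ω)) /
    ((E.nk1 k : ℝ) - 1)
def sCov0 (a b : Fin E.N → ℝ) (k : Fin E.K) (ω : E.Omega) : ℝ :=
  (∑ i ∈ E.stratum k, E.Z ω i * (1 - E.T ω i) * (a i - E.mean0 a k ω) * (b i - E.mean0 b k ω)) /
    ((E.nk0 k : ℝ) - 1)
def sCovS (a b : Fin E.N → ℝ) (k : Fin E.K) (ω : E.Omega) : ℝ :=
  (∑ i ∈ E.stratum k, E.Z ω i * (a i - E.meanS a k ω) * (b i - E.meanS b k ω)) /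
    ((E.nk k : ℝ) - 1)

/-- The `(τ,τ)` entry of the covariance matrix `V`. -/
def Vtt (Y1 Y0 : Fin E.N → ℝ) : ℝ :=
  ∑ k, (E.Pi k) ^ 2 / E.pik k *
    (E.covK Y1 Y1 k / E.e1 k + E.covK Y0 Y0 k / E.e0 k -
      E.fk k * E.covK (fun i => Y1 i - Y0 i) (fun i => Y1 i - Y0 i) k)
/-- The `(τ,X)` block of `V`. -/
def VtX {J : ℕ} (Y1 Y0 : Fin E.N → ℝ) (X : Fin E.N → Fin J → ℝ) : Fin J → ℝ := fun j =>
  ∑ k, (E.Pi k) ^ 2 / E.pik k *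
    (E.covK (fun i => X i j) Y1 k / E.e1 k + E.covK (fun i => X i j) Y0 k / E.e0 k)
/-- The `(τ,W)` block of `V`. -/
def VtW {J : ℕ} (Y1 Y0 : Fin E.N → ℝ) (W : Fin E.N → Fin J → ℝ) : Fin J → ℝ := fun j =>
  ∑ k, (E.Pi k) ^ 2 / E.pik k *
    ((1 - E.fk k) * E.covK (fun i => W i j) (fun i => Y1 i - Y0 i) k)
/-- The `(X,X)` block of `V`. -/
def VXX {J : ℕ} (X : Fin E.N → Fin J → ℝ) : Matrix (Fin J) (Fin J) ℝ :=
  Matrix.of fun j j' =>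
    ∑ k, (E.Pi k) ^ 2 / E.pik k *
      (E.covK (fun i => X i j) (fun i => X i j') k / (E.e1 k * E.e0 k))
/-- The `(W,W)` block of `V`. -/
def VWW {J : ℕ} (W : Fin E.N → Fin J → ℝ) : Matrix (Fin J) (Fin J) ℝ :=
  Matrix.of fun j j' =>
    ∑ k, (E.Pi k) ^ 2 / E.pik k *
      ((1 - E.fk k) * E.covK (fun i => W i j) (fun i => W i j') k)

/-- The covariance matrix of `δ̂_W` under stratified random sampling. -/
def covWSampling {J : ℕ} (W : Fin E.N → Fin J → ℝ) : Matrix (Fin J) (Fin J) ℝ :=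
  Matrix.of fun j j' =>
    ∑ k, (E.Pi k) ^ 2 * ((E.nk k : ℝ)⁻¹ - (E.Nk k : ℝ)⁻¹) *
      E.covK (fun i => W i j) (fun i => W i j') k
/-- The Mahalanobis sampling-balance criterion `M_S`. -/
def MS {J : ℕ} (W : Fin E.N → Fin J → ℝ) (ω : E.Omega) : ℝ :=
  E.hatDeltaW W ω ⬝ᵥ ((E.covWSampling W)⁻¹ *ᵥ E.hatDeltaW W ω)
/-- The conditional covariance matrix of `τ̂_X` given the sample. -/
def covXAssign {J : ℕ} (X : Fin E.N → Fin J → ℝ) (ω : E.Omega) : Matrix (Fin J) (Fin J) ℝ :=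
  Matrix.of fun j j' =>
    ∑ k, (E.Pi k) ^ 2 * ((E.nk k : ℝ) / ((E.nk1 k : ℝ) * (E.nk0 k : ℝ))) *
      E.sCovS (fun i => X i j) (fun i => X i j') k ω
/-- The Mahalanobis assignment-balance criterion `M_T`. -/
def MT {J : ℕ} (X : Fin E.N → Fin J → ℝ) (ω : E.Omega) : ℝ :=
  E.hatTauX X ω ⬝ᵥ ((E.covXAssign X ω)⁻¹ *ᵥ E.hatTauX X ω)
/-- The acceptance event `{M_S ≤ a_S, M_T ≤ a_T}`. -/
def accept {J1 J2 : ℕ} (W : Fin E.N → Fin J1 → ℝ) (X : Fin E.N → Fin J2 → ℝ) (aS aT : ℝ) :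
    Set E.Omega := {ω | E.MS W ω ≤ aS ∧ E.MT X ω ≤ aT}

/-- The SRSRR design: the SRSE design conditioned on acceptance of both balance criteria. -/
def Prr {J1 J2 : ℕ} (W : Fin E.N → Fin J1 → ℝ) (X : Fin E.N → Fin J2 → ℝ) (aS aT : ℝ) :
    Measure E.Omega := ProbabilityTheory.cond E.P (E.accept W X aS aT)

/-- The conservative variance estimator `V̂_ττ`. -/
def hatVtt (Y1 Y0 : Fin E.N → ℝ) (ω : E.Omega) : ℝ :=
  ∑ k, (E.Pi k) ^ 2 / E.pik k * (E.sCov1 Y1 Y1 k ω / E.e1 k + E.sCov0 Y0 Y0 k ω / E.e0 k)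
/-- The estimator `V̂_τX`. -/
def hatVtX {J : ℕ} (Y1 Y0 : Fin E.N → ℝ) (X : Fin E.N → Fin J → ℝ) (ω : E.Omega) : Fin J → ℝ :=
  fun j => ∑ k, (E.Pi k) ^ 2 / E.pik k *
    (E.sCov1 (fun i => X i j) Y1 k ω / E.e1 k + E.sCov0 (fun i => X i j) Y0 k ω / E.e0 k)
/-- The estimator `V̂_τW`. -/
def hatVtW {J : ℕ} (Y1 Y0 : Fin E.N → ℝ) (W : Fin E.N → Fin J → ℝ) (ω : E.Omega) : Fin J → ℝ :=
  fun j => ∑ k, (E.Pi k) ^ 2 / E.pik k *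
    ((1 - E.fk k) * (E.sCov1 (fun i => W i j) Y1 k ω - E.sCov0 (fun i => W i j) Y0 k ω))
/-- The estimator `V̂_XX`. -/
def hatVXX {J : ℕ} (X : Fin E.N → Fin J → ℝ) (ω : E.Omega) : Matrix (Fin J) (Fin J) ℝ :=
  Matrix.of fun j j' => ∑ k, (E.Pi k) ^ 2 / E.pik k *
    (E.sCovS (fun i => X i j) (fun i => X i j') k ω / (E.e1 k * E.e0 k))
/-- The plug-in estimator `R̂²_W` (also used for `R̂²_E` with analysis-stage covariates). -/
def hatRW2 {J : ℕ} (Y1 Y0 : Fin E.N → ℝ) (W : Fin E.N → Fin J → ℝ) (ω : E.Omega) : ℝ :=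
  (E.hatVtW Y1 Y0 W ω ⬝ᵥ ((E.VWW W)⁻¹ *ᵥ E.hatVtW Y1 Y0 W ω)) / E.hatVtt Y1 Y0 ω
/-- The plug-in estimator `R̂²_X` (also used for `R̂²_C` with analysis-stage covariates). -/
def hatRX2 {J : ℕ} (Y1 Y0 : Fin E.N → ℝ) (X : Fin E.N → Fin J → ℝ) (ω : E.Omega) : ℝ :=
  (E.hatVtX Y1 Y0 X ω ⬝ᵥ ((E.hatVXX X ω)⁻¹ *ᵥ E.hatVtX Y1 Y0 X ω)) / E.hatVtt Y1 Y0 ω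

/-- The estimated regression-adjustment coefficient `β̂`. -/
def hatBeta {J : ℕ} (Y1 Y0 : Fin E.N → ℝ) (C : Fin E.N → Fin J → ℝ) (ω : E.Omega) : Fin J → ℝ :=
  (E.hatVXX C ω)⁻¹ *ᵥ E.hatVtX Y1 Y0 C ω
/-- The estimated regression-adjustment coefficient `γ̂`. -/
def hatGamma {J : ℕ} (Y1 Y0 : Fin E.N → ℝ) (Ecov : Fin E.N → Fin J → ℝ) (ω : E.Omega) :
    Fin J → ℝ :=
  (E.VWW Ecov)⁻¹ *ᵥ E.hatVtW Y1 Y0 Ecov ω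
/-- The regression-adjusted estimator `τ̂_adj = τ̂ - β̂ᵀτ̂_C - γ̂ᵀδ̂_E`. -/
def hatTauAdj {J3 J4 : ℕ} (Y1 Y0 : Fin E.N → ℝ) (C : Fin E.N → Fin J4 → ℝ)
    (Ecov : Fin E.N → Fin J3 → ℝ) (ω : E.Omega) : ℝ :=
  E.hatTau Y1 Y0 ω - E.hatBeta Y1 Y0 C ω ⬝ᵥ E.hatTauX C ω -
    E.hatGamma Y1 Y0 Ecov ω ⬝ᵥ E.hatDeltaW Ecov ω

/-- The vector stratified difference-in-means estimator `τ̂_R`. -/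
def hatTauVec {d : ℕ} (R1 R0 : Fin E.N → Fin d → ℝ) (ω : E.Omega) : Fin d → ℝ := fun j =>
  ∑ k, E.Pi k * (E.mean1 (fun i => R1 i j) k ω - E.mean0 (fun i => R0 i j) k ω)
/-- The vector estimand `τ_R`. -/
def tauVec {d : ℕ} (R1 R0 : Fin E.N → Fin d → ℝ) : Fin d → ℝ := fun j =>
  ∑ k, E.Pi k * (E.meanK (fun i => R1 i j) k - E.meanK (fun i => R0 i j) k)
/-- The covariance matrix `V_R` of `√n (τ̂_R - τ_R)`. -/
def VRmat {d : ℕ} (R1 R0 : Fin E.N → Fin d → ℝ) : Matrix (Fin d) (Fin d) ℝ :=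
  Matrix.of fun j j' =>
    ∑ k, (E.Pi k) ^ 2 / E.pik k *
      (E.covK (fun i => R1 i j) (fun i => R1 i j') k / E.e1 k +
        E.covK (fun i => R0 i j) (fun i => R0 i j') k / E.e0 k -
        E.fk k * E.covK (fun i => R1 i j - R0 i j) (fun i => R1 i j' - R0 i j') k)

/-- The attainable sampling vectors. -/
def validZ : Finset (Fin E.N → Bool) :=
  Finset.univ.filter fun z => ∀ k, ((E.stratum k).filter fun i => z i = true).card = E.nk k
/-- Stratified random sampling without replacement: the uniform distribution over attainable
sampling vectors. -/
def Psamp : Measure (Fin E.N → Bool) := unif E.validZ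
/-- `δ̂_W` as a function of the sampling vector alone. -/
def deltaWz {J : ℕ} (W : Fin E.N → Fin J → ℝ) (z : Fin E.N → Bool) : Fin J → ℝ := fun j =>
  ∑ k, E.Pi k *
    ((∑ i ∈ E.stratum k, (if z i then (1 : ℝ) else 0) * W i j) / (E.nk k : ℝ) -
      E.meanK (fun i => W i j) k)

/-- The attainable treatment-assignment vectors given the sampling vector `z`. -/
def validT (z : Fin E.N → Bool) : Finset (Fin E.N → Bool) :=
  Finset.univ.filter fun t =>
    (∀ k, ((E.stratum k).filter fun i => z i = true ∧ t i = true).card = E.nk1 k) ∧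
    (∀ i, t i = true → z i = true)
/-- Stratified randomization of the sampled units, conditionally on the sampling vector `z`. -/
def Pgiven (z : Fin E.N → Bool) : Measure E.Omega :=
  unif ((E.validT z).image fun t => (z, t))

/-- `M_S` as a function of the sampling vector alone. -/
def MSz {J : ℕ} (W : Fin E.N → Fin J → ℝ) (z : Fin E.N → Bool) : ℝ := E.MS W (z, z)
/-- The acceptable sampling vectors. -/
def acceptZ {J : ℕ} (W : Fin E.N → Fin J → ℝ) (aS : ℝ) : Finset (Fin E.N → Bool) :=
  E.validZ.filter fun z => E.MSz W z ≤ aS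
/-- The acceptable assignment vectors given a sampling vector `z`. -/
def acceptT {J : ℕ} (X : Fin E.N → Fin J → ℝ) (aT : ℝ) (z : Fin E.N → Bool) :
    Finset (Fin E.N → Bool) := (E.validT z).filter fun t => E.MT X (z, t) ≤ aT
/-- The set `M` of jointly acceptable pairs. -/
def acceptedPairs {J1 J2 : ℕ} (W : Fin E.N → Fin J1 → ℝ) (X : Fin E.N → Fin J2 → ℝ)
    (aS aT : ℝ) : Finset E.Omega :=
  E.valid.filter fun ω => E.MS W ω ≤ aS ∧ E.MT X ω ≤ aT
/-- The single-stage rejective design: uniform over jointly acceptable pairs. -/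
def singleStage {J1 J2 : ℕ} (W : Fin E.N → Fin J1 → ℝ) (X : Fin E.N → Fin J2 → ℝ)
    (aS aT : ℝ) : Measure E.Omega := unif (E.acceptedPairs W X aS aT)
/-- The two-stage rejective design: first a uniform acceptable sampling, then a uniform
acceptable assignment given the sampling. -/
def twoStage {J1 J2 : ℕ} (W : Fin E.N → Fin J1 → ℝ) (X : Fin E.N → Fin J2 → ℝ) (aS aT : ℝ) :
    Measure E.Omega :=
  ((E.acceptZ W aS).card : ℝ≥0∞)⁻¹ • ∑ z ∈ E.acceptZ W aS,
    (((E.acceptT X aT z).card : ℝ≥0∞)⁻¹ • ∑ t ∈ E.acceptT X aT z, Measure.dirac (z, t))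
/-- The conditional acceptance probability `P(M_T ≤ a_T ∣ Z = z)`. -/
def condAcceptProb {J : ℕ} (X : Fin E.N → Fin J → ℝ) (aT : ℝ) (z : Fin E.N → Bool) : ℝ :=
  ((E.acceptT X aT z).card : ℝ) / ((E.validT z).card : ℝ)

end SRSE

/-! Splitting each deviation from the population mean into a within-stratum and a
between-stratum part gives the finite-population analysis of variance
`(N - 1) S² = ∑ₖ (N_[k] - 1) S²_[k] + ∑ₖ N_[k] (Ȳ_[k] - Ȳ)²`. With `Δₜ = Ȳ_[k](t) - Ȳ(t)` one has
`d_[k] = Δ₁² / e₁ + Δ₀² / e₀ - f (Δ₁ - Δ₀)²`, so applying the decomposition to `Y(1)`, `Y(0)`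
and `τ` gives `(N - 1) V_ττ,C = ∑ₖ ((N_[k] - 1) V_[k]ττ + N_[k] d_[k])`; the identity follows from
`(N_[k] - 1) / (N - 1) - Π_[k] = -(1 - Π_[k]) / (N - 1)`. -/

open Finset in
theorem sum_sub_mul_sub_eq_sum_centered_add {ι : Type*} (s : Finset ι) (a b : ι → ℝ) (x y : ℝ) :
    ∑ i ∈ s, (a i - x) * (b i - y) =
      ∑ i ∈ s, (a i - (∑ j ∈ s, a j) / #s) * (b i - (∑ j ∈ s, b j) / #s) +
        #s * ((∑ j ∈ s, a j) / #s - x) * ((∑ j ∈ s, b j) / #s - y) := by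
  rcases s.eq_empty_or_nonempty with rfl | hs
  · simp
  have hn : (#s : ℝ) ≠ 0 := by exact_mod_cast hs.card_pos.ne'
  simp only [sub_mul, mul_sub, sum_sub_distrib, ← sum_mul, ← mul_sum, sum_const, nsmul_eq_mul]
  field_simp
  ring

namespace SRSE

variable (E : SRSE)

theorem meanK_sub (a b : Fin E.N → ℝ) (k : Fin E.K) :
    E.meanK (fun i => a i - b i) k = E.meanK a k - E.meanK b k := by
  simp only [meanK, Finset.sum_sub_distrib, sub_div]

theorem meanAll_sub (a b : Fin E.N → ℝ) :
    E.meanAll (fun i => a i - b i) = E.meanAll a - E.meanAll b := by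
  simp only [meanAll, Finset.sum_sub_distrib, sub_div]

theorem sum_stratum_centered_mul (a b : Fin E.N → ℝ) (k : Fin E.K) :
    ∑ i ∈ E.stratum k, (a i - E.meanK a k) * (b i - E.meanK b k) =
      ((E.Nk k : ℝ) - 1) * E.covK a b k := by
  by_cases h1 : E.Nk k = 1
  · -- `covK` divides by `Nk - 1 = 0` here; the left side vanishes as the unit is its own mean
    obtain ⟨i₀, hi₀⟩ := Finset.card_eq_one.mp h1
    simp [covK, meanK, Nk, hi₀]
  · have h : (E.Nk k : ℝ) - 1 ≠ 0 := sub_ne_zero.mpr (by exact_mod_cast h1)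
    rw [covK, mul_div_cancel₀ _ h]

theorem sum_stratum_sub_mul_sub (a b : Fin E.N → ℝ) (k : Fin E.K) (x y : ℝ) :
    ∑ i ∈ E.stratum k, (a i - x) * (b i - y) =
      ((E.Nk k : ℝ) - 1) * E.covK a b k +
        E.Nk k * (E.meanK a k - x) * (E.meanK b k - y) := by
  rw [sum_sub_mul_sub_eq_sum_centered_add, ← sum_stratum_centered_mul]
  rfl

theorem varAll_eq_sum_within_add_between (a : Fin E.N → ℝ) :
    E.varAll a = (∑ k, (((E.Nk k : ℝ) - 1) * E.covK a a k +
      E.Nk k * (E.meanK a k - E.meanAll a) ^ 2)) / ((E.N : ℝ) - 1) := by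
  rw [varAll, ← Finset.sum_fiberwise Finset.univ E.st]
  congr 1
  refine Finset.sum_congr rfl fun k _ => ?_
  simp only [sq]
  rw [← mul_assoc]
  exact E.sum_stratum_sub_mul_sub a a k _ _

end SRSE

theorem sqrt_odds_mul_add_sq {e : ℝ} (he : 0 < e) (he' : e < 1) (x y : ℝ) :
    (Real.sqrt ((1 - e) / e) * x + Real.sqrt (e / (1 - e)) * y) ^ 2 =
      x ^ 2 / e + y ^ 2 / (1 - e) - (x - y) ^ 2 := by
  have he₀ : 0 < 1 - e := by linarith
  have hprod : Real.sqrt ((1 - e) / e) * Real.sqrt (e / (1 - e)) = 1 := by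
    rw [← Real.sqrt_mul (by positivity), div_mul_div_comm, mul_comm e,
      div_self (by positivity), Real.sqrt_one]
  calc _ = Real.sqrt ((1 - e) / e) ^ 2 * x ^ 2 + Real.sqrt (e / (1 - e)) ^ 2 * y ^ 2 +
        2 * (Real.sqrt ((1 - e) / e) * Real.sqrt (e / (1 - e))) * (x * y) := by ring
    _ = _ := by
      rw [Real.sq_sqrt (by positivity), Real.sq_sqrt (by positivity), hprod]
      field_simp
      ring

theorem statement4_general (E : SurveyExperiments.SRSE) (hN : 2 ≤ E.N)
    (Y1 Y0 : Fin E.N → ℝ) (e1 f : ℝ)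
    (he1 : 0 < e1) (he1' : e1 < 1) (hf1 : f ≤ 1) :
    let tauU : Fin E.N → ℝ := fun i => Y1 i - Y0 i
    let Vk : Fin E.K → ℝ := fun k =>
      E.covK Y1 Y1 k / e1 + E.covK Y0 Y0 k / (1 - e1) - f * E.covK tauU tauU k
    let d : Fin E.K → ℝ := fun k =>
      (Real.sqrt ((1 - e1) / e1) * (E.meanK Y1 k - E.meanAll Y1) +
          Real.sqrt (e1 / (1 - e1)) * (E.meanK Y0 k - E.meanAll Y0)) ^ 2 +
        (1 - f) * (E.meanK tauU k - E.meanAll tauU) ^ 2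
    ((E.varAll Y1 / e1 + E.varAll Y0 / (1 - e1) - f * E.varAll tauU) - ∑ k, E.Pi k * Vk k
        = (E.N : ℝ) / ((E.N : ℝ) - 1) * ∑ k, E.Pi k * d k -
            ((E.N : ℝ) - 1)⁻¹ * ∑ k, (1 - E.Pi k) * Vk k) ∧
      ∀ k, 0 ≤ d k := by
  intro tauU Vk d
  refine ⟨?_, fun k => add_nonneg (sq_nonneg _) (mul_nonneg (by linarith) (sq_nonneg _))⟩
  have hN₀ : (E.N : ℝ) ≠ 0 := by positivity
  have hN₁ : (E.N : ℝ) - 1 ≠ 0 := sub_ne_zero.mpr (by norm_cast; omega)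
  -- `d k` is the functional defining `Vk k`, applied to the between-stratum deviations
  have hd : ∀ k, d k = (E.meanK Y1 k - E.meanAll Y1) ^ 2 / e1 +
      (E.meanK Y0 k - E.meanAll Y0) ^ 2 / (1 - e1) - f * (E.meanK tauU k - E.meanAll tauU) ^ 2 := by
    intro k
    simp only [d, tauU, E.meanK_sub, E.meanAll_sub, sqrt_odds_mul_add_sq he1 he1']
    ring
  have hVC : E.varAll Y1 / e1 + E.varAll Y0 / (1 - e1) - f * E.varAll tauU =
      (∑ k, (((E.Nk k : ℝ) - 1) * Vk k + E.Nk k * d k)) / ((E.N : ℝ) - 1) := by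
    simp only [E.varAll_eq_sum_within_add_between, hd, Vk, Finset.sum_div, Finset.mul_sum]
    rw [← Finset.sum_add_distrib, ← Finset.sum_sub_distrib]
    refine Finset.sum_congr rfl fun k _ => ?_
    ring
  rw [hVC, Finset.mul_sum, Finset.mul_sum, Finset.sum_div, ← Finset.sum_sub_distrib,
    ← Finset.sum_sub_distrib]
  refine Finset.sum_congr rfl fun k _ => ?_
  simp only [SRSE.Pi]
  field_simp
  ring

/-- Corollary 1, exact identity: with equal treated proportions `e₁` and
sampling proportions `f` across strata, the difference between the asymptotic variances of
the difference-in-means estimator under the completely randomized and the stratified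
randomized survey experiments is
`V_ττ,C - V_ττ = N/(N-1) ∑ₖ Π_[k] d_[k] - (N-1)⁻¹ ∑ₖ (1-Π_[k]) V_[k]ττ`, with `d_[k] ≥ 0`. -/
theorem statement4 (E : SurveyExperiments.SRSE) (hN : 2 ≤ E.N)
    (Y1 Y0 : Fin E.N → ℝ) (e1 f : ℝ)
    (he1 : 0 < e1) (he1' : e1 < 1) (hf : 0 < f) (hf1 : f ≤ 1) :
    let tauU : Fin E.N → ℝ := fun i => Y1 i - Y0 i
    let Vk : Fin E.K → ℝ := fun k =>
      E.covK Y1 Y1 k / e1 + E.covK Y0 Y0 k / (1 - e1) - f * E.covK tauU tauU k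
    let d : Fin E.K → ℝ := fun k =>
      (Real.sqrt ((1 - e1) / e1) * (E.meanK Y1 k - E.meanAll Y1) +
          Real.sqrt (e1 / (1 - e1)) * (E.meanK Y0 k - E.meanAll Y0)) ^ 2 +
        (1 - f) * (E.meanK tauU k - E.meanAll tauU) ^ 2
    ((E.varAll Y1 / e1 + E.varAll Y0 / (1 - e1) - f * E.varAll tauU) - ∑ k, E.Pi k * Vk k
        = (E.N : ℝ) / ((E.N : ℝ) - 1) * ∑ k, E.Pi k * d k -
            ((E.N : ℝ) - 1)⁻¹ * ∑ k, (1 - E.Pi k) * Vk k) ∧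
      ∀ k, 0 ≤ d k :=
  statement4_general E hN Y1 Y0 e1 f he1 he1' hf1

end SurveyExperiments
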